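/- arXiv:2207.11150 — 3 statements merged into one kernel-verified Lean document; each statement's English description precedes it below -/
import Mathlib

section
/- Let n ≥ 1 be an integer, m ≥ 2, i ≠ j, and let t_i, t_j be the m×m matrices defined as the identity with the i-th (resp. j-th) column replaced by v_i (resp. v_j), where v_k = (n,…,n,−1,n,…,n)^T with −1 in the k-th entry. Then the characteristic polynomial of t_i t_j is (x−1)^{m−2} · (x^2 − (n^2−2)x + 1). -/
open Polynomial

/-- The matrix `t j`: the identity matrix with its `j`-th column replaced by the
vector `v_j` which has entry `-1` in position `j` and entry `n` elsewhere. -/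
def tmat (m : ℕ) (n : ℝ) (j : Fin m) : Matrix (Fin m) (Fin m) ℝ :=
  Matrix.of fun k l => if l = j then (if k = j then -1 else n) else (if k = l then 1 else 0)

lemma mul_tmat_apply (m : ℕ) (n : ℝ) (i j : Fin m) (hij : i ≠ j) (k l : Fin m) :
    (tmat m n i * tmat m n j) k l =
      if l = i then (if k = i then -1 else n)
      else if l = j then (if k = j then n^2-1 else if k = i then -n else n^2+n)
      else (if k = l then 1 else 0) := by
  rw [Matrix.mul_apply]
  by_cases hlj : l = j
  · subst hlj
    simp only [tmat, Matrix.of_apply, if_pos rfl, if_neg hij]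
    have key : ∀ p : Fin m,
        (if p = i then (if k = i then (-1:ℝ) else n) else if k = p then 1 else 0) *
          (if p = l then -1 else n) =
        (if p = i then (if k = i then (-1:ℝ) else n) * n else 0) +
          (if k = p then (if p = i then 0 else (if p = l then -1 else n)) else 0) := by
      intro p
      by_cases hpi : p = i
      · subst hpi
        simp only [if_pos rfl, if_neg hij, add_zero]
        by_cases hkp : k = p <;> simp [hkp]
      · simp only [if_neg hpi, zero_add]
        split_ifs <;> ring
    simp only [key, Finset.sum_add_distrib, Finset.sum_ite_eq', Finset.sum_ite_eq,
      Finset.mem_univ, if_pos, if_true, ite_true]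
    by_cases hki : k = i
    · subst hki
      simp only [if_pos rfl, if_neg hij, if_neg (Ne.symm hij)]
      split_ifs <;> ring
    · by_cases hkl : k = l
      · subst hkl
        simp only [if_neg hki, if_pos rfl, if_neg (Ne.symm hki)]
        split_ifs <;> ring
      · simp only [if_neg hki, if_neg hkl, if_neg (Ne.symm hki)]
        split_ifs with h
        · exact absurd h.symm hij
        · ring
  · simp only [tmat, Matrix.of_apply, if_neg hlj, mul_ite, mul_one, mul_zero,
      Finset.sum_ite_eq', Finset.mem_univ, if_pos, if_true, ite_true]

lemma charpoly_one_fin (d : ℕ) : (1 : Matrix (Fin d) (Fin d) ℝ).charpoly = (X - 1)^d := by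
  rw [Matrix.charpoly_of_upperTriangular _ (Matrix.blockTriangular_one)]
  simp [Finset.prod_const]

lemma charpoly_B (n : ℝ) : (!![-1, -n; n, n^2-1] : Matrix (Fin 2) (Fin 2) ℝ).charpoly
    = X ^ 2 - C (n ^ 2 - 2) * X + 1 := by
  rw [Matrix.charpoly, Matrix.det_fin_two]
  simp [Matrix.charmatrix_apply_eq, Matrix.charmatrix_apply_ne, map_sub, map_pow, map_neg,
    _root_.map_mul, map_ofNat]
  ring

/-- For `n ≥ 1`, `m ≥ 2` and `i ≠ j`, the characteristic polynomial of `t_i t_j` is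
`(x − 1)^(m−2) (x² − (n²−2)x + 1)`. -/
theorem stmt3 (m : ℕ) (hm : 2 ≤ m) (n : ℕ) (hn : 1 ≤ n) (i j : Fin m) (hij : i ≠ j) :
    (tmat m (n : ℝ) i * tmat m (n : ℝ) j).charpoly =
      (X - 1) ^ (m - 2) * (X ^ 2 - C ((n : ℝ) ^ 2 - 2) * X + 1) := by
  -- build an equiv sending i ↦ inl 0, j ↦ inl 1
  obtain ⟨e, hei, hej⟩ : ∃ e : Fin m ≃ (Fin 2 ⊕ Fin (m-2)),
      e i = Sum.inl 0 ∧ e j = Sum.inl 1 := by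
    have h2 : m = 2 + (m - 2) := by omega
    let e0 : Fin m ≃ (Fin 2 ⊕ Fin (m-2)) := (finCongr h2).trans finSumFinEquiv.symm
    set a := e0.symm (Sum.inl 0) with ha
    set b := e0.symm (Sum.inl 1) with hb
    have hab : a ≠ b := fun h => by simpa using e0.symm.injective h
    let σ1 := Equiv.swap i a
    have hj1 : σ1 j ≠ a := fun h =>
      hij (σ1.injective (h.trans (Equiv.swap_apply_left i a).symm)).symm
    let σ2 := Equiv.swap (σ1 j) b
    refine ⟨(σ1.trans σ2).trans e0, ?_, ?_⟩
    · have : σ2 a = a := Equiv.swap_apply_of_ne_of_ne (Ne.symm hj1) hab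
      simp [Equiv.trans_apply, σ1, Equiv.swap_apply_left, this, ha]
      rw [show σ2 (e0.symm (Sum.inl 0)) = e0.symm (Sum.inl 0) from this, Equiv.apply_symm_apply]
    · simp [Equiv.trans_apply, σ2, Equiv.swap_apply_left, hb]
  have hs0 : e.symm (Sum.inl 0) = i := by rw [← hei, Equiv.symm_apply_apply]
  have hs1 : e.symm (Sum.inl 1) = j := by rw [← hej, Equiv.symm_apply_apply]
  have hri : ∀ r : Fin (m-2), e.symm (Sum.inr r) ≠ i := by
    intro r h
    have := (Equiv.symm_apply_eq e).mp h
    rw [hei] at this; cases this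
  have hrj : ∀ r : Fin (m-2), e.symm (Sum.inr r) ≠ j := by
    intro r h
    have := (Equiv.symm_apply_eq e).mp h
    rw [hej] at this; cases this
  set B : Matrix (Fin 2) (Fin 2) ℝ := !![-1, -(n:ℝ); n, (n:ℝ)^2-1] with hB
  set Cm : Matrix (Fin (m-2)) (Fin 2) ℝ :=
    Matrix.of (fun _ l => if l = 0 then (n:ℝ) else (n:ℝ)^2+(n:ℝ)) with hCm
  have hM : Matrix.reindex e e (tmat m (n:ℝ) i * tmat m (n:ℝ) j) =
      Matrix.fromBlocks B 0 Cm 1 := by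
    ext k l
    rw [Matrix.reindex_apply, Matrix.submatrix_apply, mul_tmat_apply m _ i j hij]
    rcases k with k | k <;> rcases l with l | l
    · fin_cases k <;> fin_cases l <;>
        simp [hs0, hs1, hB, hij, Ne.symm hij]
    · fin_cases k <;>
        simp [hs0, hs1, hri l, hrj l, Ne.symm (hri l), Ne.symm (hrj l)]
    · fin_cases l <;>
        simp [hs0, hs1, hri k, hrj k, hCm, hij, Ne.symm hij]
    · simp only [Matrix.fromBlocks_apply₂₂, Matrix.one_apply,
        if_neg (hri l), if_neg (hrj l), Sum.inr.injEq, EmbeddingLike.apply_eq_iff_eq]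
  have := Matrix.charpoly_reindex e (tmat m (n:ℝ) i * tmat m (n:ℝ) j)
  rw [← this, hM, Matrix.charpoly_fromBlocks_zero₁₂, charpoly_one_fin, charpoly_B, mul_comm]
end

section
/- Let G be the group with presentation ⟨t_1,…,t_m | t_k^2 = 1⟩ (the universal Coxeter group of rank m, m ≥ 2), and consider the elements ψ_{i,j} := t_i t_j t_i σ_{ij} in the semidirect product G ⋊ S_m (where S_m acts on G by permuting generators and σ_{ij} denotes the transposition (i,j)). Then the subgroup generated by {ψ_{i,j} : 1 ≤ i < j ≤ m} is a free group of rank binom(m,2). -/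
namespace Stmt11

/-- The relations `t_k² = 1` for the universal Coxeter group of rank `m`. -/
def rels (m : ℕ) : Set (FreeGroup (Fin m)) :=
  Set.range fun k : Fin m => FreeGroup.of k * FreeGroup.of k

/-- The universal Coxeter group `G = ⟨t₁,…,t_m ∣ t_k² = 1⟩ = ℤ/2 ∗ ⋯ ∗ ℤ/2`. -/
abbrev G (m : ℕ) := PresentedGroup (rels m)

/-- The generator `t_k` of `G`. -/
def gen (m : ℕ) (k : Fin m) : G m := PresentedGroup.of k

lemma gen_sq (m : ℕ) (a : Fin m) : gen m a * gen m a = 1 := by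
  have h : PresentedGroup.mk (rels m) (FreeGroup.of a * FreeGroup.of a) = 1 :=
    (QuotientGroup.eq_one_iff _).2 (Subgroup.subset_normalClosure ⟨a, rfl⟩)
  simpa [gen, PresentedGroup.of, map_mul] using h

lemma lift_rels (m : ℕ) (σ : Equiv.Perm (Fin m)) :
    ∀ r ∈ rels m, FreeGroup.lift (fun k => gen m (σ k)) r = 1 := by
  rintro r ⟨k, rfl⟩
  simp only [map_mul, FreeGroup.lift_apply_of]
  exact gen_sq m (σ k)

/-- The endomorphism of `G` induced by relabelling the generators along `σ`:
`t_k ↦ t_{σ(k)}`. -/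
def fmap (m : ℕ) (σ : Equiv.Perm (Fin m)) : G m →* G m :=
  PresentedGroup.toGroup (lift_rels m σ)

lemma fmap_comp_cancel (m : ℕ) (σ : Equiv.Perm (Fin m)) :
    (fmap m σ⁻¹).comp (fmap m σ) = MonoidHom.id (G m) := by
  ext x
  simp [fmap, gen]

lemma fmap_mul (m : ℕ) (σ τ : Equiv.Perm (Fin m)) :
    fmap m (σ * τ) = (fmap m σ).comp (fmap m τ) := by
  ext x
  simp [fmap, gen]

lemma fmap_one (m : ℕ) : fmap m 1 = MonoidHom.id (G m) := by
  ext x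
  simp [fmap, gen]

/-- The action of the symmetric group `S_m` on `G` permuting the generators. -/
def permHom (m : ℕ) : Equiv.Perm (Fin m) →* MulAut (G m) where
  toFun σ :=
    { toFun := fmap m σ
      invFun := fmap m σ⁻¹
      left_inv := fun x => DFunLike.congr_fun (fmap_comp_cancel m σ) x
      right_inv := fun x => by
        have h := fmap_comp_cancel m σ⁻¹
        rw [inv_inv] at h
        exact DFunLike.congr_fun h x
      map_mul' := (fmap m σ).map_mul }
  map_one' := by
    ext x
    exact DFunLike.congr_fun (fmap_one m) x
  map_mul' := by
    intro σ τ
    ext x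
    exact DFunLike.congr_fun (fmap_mul m σ τ) x

/-- The semidirect product `G ⋊ S_m`. -/
abbrev Tgt (m : ℕ) := SemidirectProduct (G m) (Equiv.Perm (Fin m)) (permHom m)

/-- The index set `{(i,j) : 1 ≤ i < j ≤ m}`, of cardinality `binom(m,2)`. -/
abbrev Pairs (m : ℕ) := { p : Fin m × Fin m // p.1 < p.2 }

/-- The element `ψ_{i,j} = t_i t_j t_i · σ_{(i,j)} ∈ G ⋊ S_m`. -/
def psi (m : ℕ) (p : Pairs m) : Tgt m :=
  ⟨gen m p.1.1 * gen m p.1.2 * gen m p.1.1, Equiv.swap p.1.1 p.1.2⟩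

section Aux

open List

variable {m : ℕ}

/-! ### Reduced words over `Fin m` and the action of `G ⋊ Sₘ` on them -/

/-- Reduced words: lists with no two adjacent equal letters. -/
def W (m : ℕ) := {l : List (Fin m) // l.Chain' (· ≠ ·)}

/-- Prepending a letter with cancellation. -/
def rcl (i : Fin m) : List (Fin m) → List (Fin m)
  | [] => [i]
  | (a :: t) => if a = i then t else i :: a :: t

@[simp] lemma rcl_nil (i : Fin m) : rcl i [] = [i] := rfl

@[simp] lemma rcl_cons (i a : Fin m) (t : List (Fin m)) :
    rcl i (a :: t) = if a = i then t else i :: a :: t := rfl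

lemma chain'_rcl (i : Fin m) {l : List (Fin m)} (h : l.Chain' (· ≠ ·)) :
    (rcl i l).Chain' (· ≠ ·) := by
  cases l with
  | nil => exact List.isChain_singleton _
  | cons a t =>
    by_cases ha : a = i
    · rw [rcl_cons, if_pos ha]; exact h.tail
    · rw [rcl_cons, if_neg ha]
      exact List.isChain_cons_cons.2 ⟨Ne.symm ha, h⟩

lemma rcl_rcl (i : Fin m) {l : List (Fin m)} (h : l.Chain' (· ≠ ·)) :
    rcl i (rcl i l) = l := by
  cases l with
  | nil => simp
  | cons a t =>
    by_cases ha : a = i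
    · subst ha
      simp only [rcl_cons, if_pos rfl]
      cases t with
      | nil => simp
      | cons b t' =>
        have hab : a ≠ b := (List.isChain_cons_cons.1 h).1
        simp [Ne.symm hab]
    · simp [ha]

lemma chain'_map_perm (σ : Equiv.Perm (Fin m)) {l : List (Fin m)}
    (h : l.Chain' (· ≠ ·)) : (l.map σ).Chain' (· ≠ ·) :=
  (List.isChain_map σ).2 (h.imp fun _ _ hab hc => hab (σ.injective hc))

/-- `rcl` commutes with relabelling. -/
lemma map_rcl (σ : Equiv.Perm (Fin m)) (i : Fin m) (l : List (Fin m)) :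
    (rcl i l).map σ = rcl (σ i) (l.map σ) := by
  cases l with
  | nil => simp
  | cons a t =>
    by_cases ha : a = i
    · simp [ha]
    · simp [ha, σ.injective.ne ha]

/-- The involution of `W m` given by `t_i`. -/
def eFun (i : Fin m) (x : W m) : W m := ⟨rcl i x.1, chain'_rcl i x.2⟩

@[simp] lemma eFun_coe (i : Fin m) (x : W m) : (eFun i x).1 = rcl i x.1 := rfl

lemma eFun_eFun (i : Fin m) (x : W m) : eFun i (eFun i x) = x :=
  Subtype.ext (rcl_rcl i x.2)

/-- `t_i` as a permutation of `W m`. -/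
def eP (i : Fin m) : Equiv.Perm (W m) :=
  ⟨eFun i, eFun i, eFun_eFun i, eFun_eFun i⟩

@[simp] lemma eP_apply (i : Fin m) (x : W m) : eP i x = eFun i x := rfl

/-- Relabelling of reduced words along `σ`. -/
def mapW (σ : Equiv.Perm (Fin m)) (x : W m) : W m :=
  ⟨x.1.map σ, chain'_map_perm σ x.2⟩

@[simp] lemma mapW_coe (σ : Equiv.Perm (Fin m)) (x : W m) :
    (mapW σ x).1 = x.1.map σ := rfl

lemma mapW_mapW (σ τ : Equiv.Perm (Fin m)) (x : W m) :
    mapW σ (mapW τ x) = mapW (σ * τ) x := by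
  apply Subtype.ext
  simp [List.map_map, Function.comp_def]

/-- `σ` as a permutation of `W m`. -/
def mP (σ : Equiv.Perm (Fin m)) : Equiv.Perm (W m) :=
  ⟨mapW σ, mapW σ⁻¹,
    fun x => by rw [mapW_mapW]; simp [mapW, Subtype.ext_iff]; rfl,
    fun x => by rw [mapW_mapW]; simp [mapW, Subtype.ext_iff]; rfl⟩

@[simp] lemma mP_apply (σ : Equiv.Perm (Fin m)) (x : W m) : mP σ x = mapW σ x := rfl

/-- The homomorphism `Sₘ → Perm (W m)`. -/
def pactHom (m : ℕ) : Equiv.Perm (Fin m) →* Equiv.Perm (W m) where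
  toFun := mP
  map_one' := by
    apply Equiv.ext; intro x
    apply Subtype.ext; simp [mapW]
  map_mul' σ τ := by
    apply Equiv.ext; intro x
    apply Subtype.ext
    simp [mP, mapW, List.map_map, Function.comp_def]

lemma eP_rels (m : ℕ) : ∀ r ∈ rels m, FreeGroup.lift (fun k : Fin m => eP k) r = 1 := by
  rintro r ⟨k, rfl⟩
  simp only [map_mul, FreeGroup.lift_apply_of]
  apply Equiv.ext; intro x
  exact eFun_eFun k x

/-- The homomorphism `G → Perm (W m)`. -/
def gactHom (m : ℕ) : G m →* Equiv.Perm (W m) :=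
  PresentedGroup.toGroup (eP_rels m)

@[simp] lemma gactHom_gen (m : ℕ) (k : Fin m) : gactHom m (gen m k) = eP k :=
  PresentedGroup.toGroup.of _

lemma compat (m : ℕ) : ∀ σ : Equiv.Perm (Fin m),
    (gactHom m).comp ((permHom m σ).toMonoidHom)
      = (MulAut.conj (pactHom m σ)).toMonoidHom.comp (gactHom m) := by
  intro σ
  apply PresentedGroup.ext
  intro x
  show gactHom m (fmap m σ (PresentedGroup.of x))
      = pactHom m σ * gactHom m (PresentedGroup.of x) * (pactHom m σ)⁻¹
  have h1 : fmap m σ (PresentedGroup.of x) = gen m (σ x) := by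
    simp [fmap, gen]
  rw [h1]
  have h2 : gactHom m (PresentedGroup.of x) = eP x := gactHom_gen m x
  rw [gactHom_gen, h2]
  symm
  rw [mul_inv_eq_iff_eq_mul]
  apply Equiv.ext; intro w
  show mapW σ (eFun x w) = eFun (σ x) (mapW σ w)
  apply Subtype.ext
  exact map_rcl σ x w.1

/-- The action of `G ⋊ Sₘ` on reduced words. -/
def Φ (m : ℕ) : Tgt m →* Equiv.Perm (W m) :=
  SemidirectProduct.lift (gactHom m) (pactHom m) (compat m)

noncomputable instance : MulAction (Tgt m) (W m) := MulAction.compHom _ (Φ m)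

lemma smul_def (g : Tgt m) (x : W m) : g • x = Φ m g x := rfl

lemma psi_smul (p : Pairs m) (x : W m) :
    psi m p • x =
      eFun p.1.1 (eFun p.1.2 (eFun p.1.1 (mapW (Equiv.swap p.1.1 p.1.2) x))) := by
  rw [smul_def]
  have : psi m p = SemidirectProduct.inl (gen m p.1.1 * gen m p.1.2 * gen m p.1.1)
      * SemidirectProduct.inr (Equiv.swap p.1.1 p.1.2) :=
    SemidirectProduct.mk_eq_inl_mul_inr _ _
  rw [this, map_mul]
  simp only [Φ, SemidirectProduct.lift_inl, SemidirectProduct.lift_inr, map_mul, gactHom_gen]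
  rfl


/-! ### Ping-pong sets -/

/-- Words starting with `i, j`. -/
def Xp (p : Pairs m) : Set (W m) := {x | ∃ r, x.1 = p.1.1 :: p.1.2 :: r}

/-- Words starting with `j, i`. -/
def Yp (p : Pairs m) : Set (W m) := {x | ∃ r, x.1 = p.1.2 :: p.1.1 :: r}

lemma forward_list (i j : Fin m) (hij : i ≠ j) (l : List (Fin m))
    (hl : l.Chain' (· ≠ ·)) (hno : ∀ r, l ≠ j :: i :: r) :
    ∃ r, rcl i (rcl j (rcl i (l.map (Equiv.swap i j)))) = i :: j :: r := by
  have hji : j ≠ i := hij.symm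
  cases l with
  | nil => exact ⟨[i], by simp [hij, hji]⟩
  | cons a t =>
    by_cases hai : a = i
    · exact ⟨i :: j :: t.map (Equiv.swap i j), by simp [hai, hij, hji]⟩
    · by_cases haj : a = j
      · cases t with
        | nil => exact ⟨[], by simp [haj, hij, hji]⟩
        | cons b t' =>
          have hab : a ≠ b := (List.isChain_cons_cons.1 hl).1
          have hbj : b ≠ j := fun hb => hab (haj.trans hb.symm)
          have hbi : b ≠ i := fun hb => hno t' (by rw [haj, hb])
          have hsb : Equiv.swap i j b = b := Equiv.swap_apply_of_ne_of_ne hbi hbj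
          exact ⟨b :: t'.map (Equiv.swap i j), by simp [haj, hsb, hbi, hbj, hij, hji]⟩
      · have hsa : Equiv.swap i j a = a := Equiv.swap_apply_of_ne_of_ne hai haj
        exact ⟨i :: a :: t.map (Equiv.swap i j), by simp [hsa, hai, haj, hij, hji]⟩

lemma backward_list (i j : Fin m) (hij : i ≠ j) (l : List (Fin m))
    (hl : l.Chain' (· ≠ ·)) (hno : ∀ r, l ≠ i :: j :: r) :
    ∃ r, (rcl i (rcl j (rcl i l))).map (Equiv.swap i j) = j :: i :: r := by
  have hji : j ≠ i := hij.symm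
  cases l with
  | nil => exact ⟨[j], by simp [hij, hji]⟩
  | cons a t =>
    by_cases hai : a = i
    · cases t with
      | nil => exact ⟨[], by simp [hai, hij, hji]⟩
      | cons b t' =>
        have hab : a ≠ b := (List.isChain_cons_cons.1 hl).1
        have hbi : b ≠ i := fun hb => hab (hai.trans hb.symm)
        have hbj : b ≠ j := fun hb => hno t' (by rw [hai, hb])
        have hsb : Equiv.swap i j b = b := Equiv.swap_apply_of_ne_of_ne hbi hbj
        exact ⟨b :: t'.map (Equiv.swap i j), by simp [hai, hsb, hbi, hbj, hij, hji]⟩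
    · by_cases haj : a = j
      · exact ⟨j :: i :: t.map (Equiv.swap i j), by simp [haj, hij, hji]⟩
      · have hsa : Equiv.swap i j a = a := Equiv.swap_apply_of_ne_of_ne hai haj
        exact ⟨j :: a :: t.map (Equiv.swap i j), by simp [hsa, hai, haj, hij, hji]⟩

lemma pair_ne (p : Pairs m) : p.1.1 ≠ p.1.2 := ne_of_lt p.2

lemma psi_smul_mem (p : Pairs m) (x : W m) (hx : x ∉ Yp p) : psi m p • x ∈ Xp p := by
  rw [psi_smul]
  have hno : ∀ r, x.1 ≠ p.1.2 :: p.1.1 :: r := by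
    intro r hr
    exact hx ⟨r, hr⟩
  exact forward_list p.1.1 p.1.2 (pair_ne p) x.1 x.2 hno

lemma psi_inv_smul_mem (p : Pairs m) (x : W m) (hx : x ∉ Xp p) :
    (psi m p)⁻¹ • x ∈ Yp p := by
  set z : W m := eFun p.1.1 (eFun p.1.2 (eFun p.1.1 x)) with hz
  set c : W m := mapW (Equiv.swap p.1.1 p.1.2) z with hc
  have hpc : psi m p • c = x := by
    rw [psi_smul]
    have : mapW (Equiv.swap p.1.1 p.1.2) c = z := by
      rw [hc, mapW_mapW]
      have : Equiv.swap p.1.1 p.1.2 * Equiv.swap p.1.1 p.1.2 = 1 := by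
        rw [← Equiv.swap_inv]; exact inv_mul_cancel _
      rw [this]
      apply Subtype.ext; simp [mapW]
    rw [this, hz, eFun_eFun, eFun_eFun, eFun_eFun]
  have hcy : c ∈ Yp p := by
    have hno : ∀ r, x.1 ≠ p.1.1 :: p.1.2 :: r := fun r hr => hx ⟨r, hr⟩
    exact backward_list p.1.1 p.1.2 (pair_ne p) x.1 x.2 hno
  have : (psi m p)⁻¹ • x = c := by
    rw [← hpc, inv_smul_smul]
  rw [this]
  exact hcy

lemma Xp_disj_Yp_self (p : Pairs m) (x : W m) (hx : x ∈ Xp p) : x ∉ Yp p := by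
  rintro ⟨r, hr⟩
  rcases hx with ⟨s, hs⟩
  rw [hs] at hr
  injection hr with h1 _
  exact pair_ne p h1

lemma Yp_disj_Xp_self (p : Pairs m) (x : W m) (hx : x ∈ Yp p) : x ∉ Xp p := by
  rintro ⟨r, hr⟩
  rcases hx with ⟨s, hs⟩
  rw [hs] at hr
  injection hr with h1 _
  exact pair_ne p h1.symm

lemma psi_pow_smul_mem (p : Pairs m) (n : ℕ) (hn : n ≠ 0) (x : W m) (hx : x ∉ Yp p) :
    psi m p ^ n • x ∈ Xp p := by
  induction n generalizing x with
  | zero => exact absurd rfl hn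
  | succ k ih =>
    rcases Nat.eq_zero_or_pos k with hk | hk
    · subst hk
      simpa using psi_smul_mem p x hx
    · rw [pow_succ, mul_smul]
      exact ih hk.ne' _ (Xp_disj_Yp_self p _ (psi_smul_mem p x hx))

lemma psi_inv_pow_smul_mem (p : Pairs m) (n : ℕ) (hn : n ≠ 0) (x : W m) (hx : x ∉ Xp p) :
    ((psi m p)⁻¹) ^ n • x ∈ Yp p := by
  induction n generalizing x with
  | zero => exact absurd rfl hn
  | succ k ih =>
    rcases Nat.eq_zero_or_pos k with hk | hk
    · subst hk
      simpa using psi_inv_smul_mem p x hx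
    · rw [pow_succ, mul_smul]
      exact ih hk.ne' _ (Yp_disj_Xp_self p _ (psi_inv_smul_mem p x hx))

lemma psi_zpow_smul_mem (p : Pairs m) (n : ℤ) (hn : n ≠ 0) (x : W m)
    (hx : x ∉ Xp p ∧ x ∉ Yp p) : psi m p ^ n • x ∈ Xp p ∪ Yp p := by
  rcases n with n | n
  · left
    have hn' : n ≠ 0 := by simpa using hn
    rw [Int.ofNat_eq_coe, zpow_natCast]
    exact psi_pow_smul_mem p n hn' x hx.2
  · right
    rw [zpow_negSucc, ← inv_pow]
    exact psi_inv_pow_smul_mem p (n + 1) (Nat.succ_ne_zero n) x hx.1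

/-! ### Disjointness of the ping-pong sets -/

lemma pairs_eq (p q : Pairs m) (h1 : p.1.1 = q.1.1) (h2 : p.1.2 = q.1.2) : p = q :=
  Subtype.ext (Prod.ext h1 h2)

lemma pairs_cross (p q : Pairs m) (h1 : p.1.1 = q.1.2) (h2 : p.1.2 = q.1.1) : False := by
  have := p.2.trans (h2 ▸ q.2)
  rw [h1] at this
  exact lt_irrefl _ this

lemma notmem_of_ne {p q : Pairs m} (hpq : p ≠ q) (x : W m)
    (hx : x ∈ Xp q ∪ Yp q) : x ∉ Xp p ∧ x ∉ Yp p := by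
  constructor
  · rintro ⟨r, hr⟩
    rcases hx with ⟨s, hs⟩ | ⟨s, hs⟩
    · rw [hr] at hs
      injection hs with h1 hs'
      injection hs' with h2 _
      exact hpq (pairs_eq p q h1 h2)
    · rw [hr] at hs
      injection hs with h1 hs'
      injection hs' with h2 _
      exact pairs_cross p q h1 h2
  · rintro ⟨r, hr⟩
    rcases hx with ⟨s, hs⟩ | ⟨s, hs⟩
    · rw [hr] at hs
      injection hs with h1 hs'
      injection hs' with h2 _
      exact pairs_cross p q h2 h1
    · rw [hr] at hs
      injection hs with h1 hs'
      injection hs' with h2 _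
      exact hpq (pairs_eq p q h2 h1)

/-! ### Assembling the ping-pong lemma -/

open Pointwise in
lemma hpp_lemma :
    _root_.Pairwise fun p q : Pairs m => ∀ h : Multiplicative ℤ, h ≠ 1 →
      (zpowersHom (Tgt m) (psi m p)) h • (Xp q ∪ Yp q) ⊆ Xp p ∪ Yp p := by
  intro p q hpq h hne
  rintro _ ⟨x, hx, rfl⟩
  rw [zpowersHom_apply]
  have hn : Multiplicative.toAdd h ≠ 0 := fun h0 => hne (toAdd_eq_zero.1 h0)
  exact psi_zpow_smul_mem p _ hn x (notmem_of_ne hpq x hx)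

/-- Auxiliary index type: the pairs plus one dummy index (to make the index type
nontrivial even when `m = 2`). -/
def Hfam (m : ℕ) : Option (Pairs m) → Type
  | none => PUnit
  | some _ => Multiplicative ℤ

instance (o : Option (Pairs m)) : Group (Hfam m o) := by
  cases o with
  | none => exact inferInstanceAs (Group PUnit)
  | some _ => exact inferInstanceAs (Group (Multiplicative ℤ))

instance : Subsingleton (Hfam m none) := inferInstanceAs (Subsingleton PUnit)

def fH (m : ℕ) : (o : Option (Pairs m)) → Hfam m o →* Tgt m
  | none => 1
  | some p => zpowersHom (Tgt m) (psi m p)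

/-- The empty reduced word. -/
def nilW (m : ℕ) : W m := ⟨[], List.isChain_nil⟩

def XH (m : ℕ) : Option (Pairs m) → Set (W m)
  | none => {nilW m}
  | some p => Xp p ∪ Yp p

lemma nilW_notmem (p : Pairs m) : nilW m ∉ Xp p ∧ nilW m ∉ Yp p := by
  constructor <;> rintro ⟨r, hr⟩ <;> simp [nilW] at hr

def retrF (m : ℕ) : (o : Option (Pairs m)) → Hfam m o →* FreeGroup (Pairs m)
  | none => 1
  | some p => zpowersHom (FreeGroup (Pairs m)) (FreeGroup.of p)

open Pointwise in
lemma hppH :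
    _root_.Pairwise fun o₁ o₂ : Option (Pairs m) => ∀ h : Hfam m o₁, h ≠ 1 →
      fH m o₁ h • XH m o₂ ⊆ XH m o₁ := by
  intro o₁ o₂ hne
  cases o₁ with
  | none => intro h hne1; exact absurd (Subsingleton.elim h 1) hne1
  | some p =>
    intro h hne1
    rintro _ ⟨x, hx, rfl⟩
    have hne1' : (show Multiplicative ℤ from h) ≠ 1 := fun hh => hne1 hh
    have hn : Multiplicative.toAdd (show Multiplicative ℤ from h) ≠ 0 :=
      fun h0 => hne1' (toAdd_eq_zero.1 h0)
    have key : ∀ y : W m, y ∉ Xp p → y ∉ Yp p →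
        fH m (some p) h • y ∈ XH m (some p) := by
      intro y hy1 hy2
      show psi m p ^ (Multiplicative.toAdd (show Multiplicative ℤ from h)) • y ∈ Xp p ∪ Yp p
      exact psi_zpow_smul_mem p _ hn y ⟨hy1, hy2⟩
    cases o₂ with
    | none =>
      rcases hx with rfl
      exact key _ (nilW_notmem p).1 (nilW_notmem p).2
    | some q =>
      have hpq : p ≠ q := fun hh => hne (by rw [hh])
      rcases notmem_of_ne hpq x hx with ⟨h1, h2⟩
      exact key x h1 h2

lemma psi_lift_injective (m : ℕ) (hm : 2 ≤ m) :
    Function.Injective (FreeGroup.lift (psi m) : FreeGroup (Pairs m) →* Tgt m) := by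
  classical
  have p₀ : Pairs m := ⟨(⟨0, by omega⟩, ⟨1, by omega⟩), by simp [Fin.lt_def]⟩
  haveI : Nonempty (Pairs m) := ⟨p₀⟩
  have hcard : 3 ≤ Cardinal.mk (Option (Pairs m))
      ∨ ∃ o : Option (Pairs m), 3 ≤ Cardinal.mk (Hfam m o) := by
    right
    refine ⟨some p₀, ?_⟩
    have h1 : (3 : Cardinal) ≤ Cardinal.aleph0 := by
      exact_mod_cast (Cardinal.nat_lt_aleph0 3).le
    exact h1.trans (Cardinal.aleph0_le_mk (Multiplicative ℤ))
  have hXnonempty : ∀ o : Option (Pairs m), (XH m o).Nonempty := by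
    intro o
    cases o with
    | none => exact ⟨nilW m, rfl⟩
    | some p =>
      refine ⟨⟨[p.1.1, p.1.2], List.isChain_pair.2 (pair_ne p)⟩, Or.inl ?_⟩
      exact ⟨[], rfl⟩
  have hXdisj : _root_.Pairwise (Function.onFun _root_.Disjoint (XH m)) := by
    intro o₁ o₂ hne
    show _root_.Disjoint (XH m o₁) (XH m o₂)
    rw [Set.disjoint_left]
    intro x hx1 hx2
    cases o₁ with
    | none =>
      rcases hx1 with rfl
      cases o₂ with
      | none => exact hne rfl
      | some q =>
        rcases hx2 with hx2 | hx2 <;>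
          [exact (nilW_notmem q).1 hx2; exact (nilW_notmem q).2 hx2]
    | some p =>
      cases o₂ with
      | none =>
        rcases hx2 with rfl
        rcases hx1 with hx1 | hx1 <;>
          [exact (nilW_notmem p).1 hx1; exact (nilW_notmem p).2 hx1]
      | some q =>
        have hpq : p ≠ q := fun hh => hne (by rw [hh])
        rcases notmem_of_ne hpq x hx2 with ⟨h1, h2⟩
        rcases hx1 with hx1 | hx1
        · exact h1 hx1
        · exact h2 hx1
  have hinj : Function.Injective (Monoid.CoprodI.lift (fH m)) :=
    Monoid.CoprodI.lift_injective_of_ping_pong (fH m) hcard (XH m) hXnonempty hXdisj hppH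
  -- transfer along the embedding `FreeGroup (Pairs m) → CoprodI (Hfam m)`
  let emb : FreeGroup (Pairs m) →* Monoid.CoprodI (Hfam m) :=
    FreeGroup.lift fun p =>
      (Monoid.CoprodI.of (M := Hfam m) (i := some p)) (Multiplicative.ofAdd (1 : ℤ))
  have hcomp : (Monoid.CoprodI.lift (retrF m)).comp emb = MonoidHom.id _ := by
    apply FreeGroup.ext_hom
    intro p
    simp only [MonoidHom.comp_apply, MonoidHom.id_apply, emb, FreeGroup.lift_apply_of,
      Monoid.CoprodI.lift_of]
    show FreeGroup.of p ^ (1 : ℤ) = FreeGroup.of p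
    exact zpow_one _
  have embinj : Function.Injective emb := by
    intro a b hab
    have h1 := DFunLike.congr_fun hcomp a
    have h2 := DFunLike.congr_fun hcomp b
    simp only [MonoidHom.comp_apply, MonoidHom.id_apply] at h1 h2
    rw [← h1, ← h2, hab]
  have heq : (Monoid.CoprodI.lift (fH m)).comp emb
      = (FreeGroup.lift (psi m) : FreeGroup (Pairs m) →* Tgt m) := by
    apply FreeGroup.ext_hom
    intro p
    simp only [MonoidHom.comp_apply, emb, FreeGroup.lift_apply_of, Monoid.CoprodI.lift_of]
    show psi m p ^ (1 : ℤ) = psi m p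
    exact zpow_one _
  have := hinj.comp embinj
  rwa [← MonoidHom.coe_comp, heq] at this

/-! ### Cardinality -/

def pairsEquiv (m : ℕ) : Pairs m ≃ Σ j : Fin m, Fin (j : ℕ) where
  toFun p := ⟨p.1.2, ⟨(p.1.1 : ℕ), p.2⟩⟩
  invFun x := ⟨(⟨(x.2 : ℕ), x.2.2.trans x.1.2⟩, x.1), x.2.2⟩
  left_inv p := rfl
  right_inv x := rfl

lemma card_pairs (m : ℕ) : Nat.card (Pairs m) = m.choose 2 := by
  classical
  rw [Nat.card_congr (pairsEquiv m), Nat.card_eq_fintype_card, Fintype.card_sigma]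
  simp only [Fintype.card_fin]
  rw [Fin.sum_univ_eq_sum_range (fun i => i) m, Finset.sum_range_id, Nat.choose_two_right]

end Aux

/-- The subgroup of `G ⋊ S_m` generated by the `ψ_{i,j}` (for `1 ≤ i < j ≤ m`) is free of
rank `binom(m,2)`: the lift of `ψ` to the free group on the `binom(m,2)` index pairs is
injective. -/
theorem stmt11 (m : ℕ) (hm : 2 ≤ m) :
    Nat.card (Pairs m) = m.choose 2 ∧
    Function.Injective (FreeGroup.lift (psi m) : FreeGroup (Pairs m) →* Tgt m) := by
  exact ⟨card_pairs m, psi_lift_injective m hm⟩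

end Stmt11
end

section
/- In the universal Coxeter group G = ⟨t_1,…,t_m | t_k^2 = 1⟩ with m ≥ 2, if 𝐰 = ψ_{i_1,j_1}^{ε_1} ψ_{i_2,j_2}^{ε_2} ⋯ ψ_{i_s,j_s}^{ε_s} (each ε_l = ±1, consecutive factors not mutually inverse, s ≥ 1) is expressed via ψ_{i,j} = t_i t_j t_i σ_{(i,j)} in G ⋊ S_m, then the reduced word in the generators t_k of the G-component of 𝐰 begins with t_{a} t_{b}, where (a,b) = (i_1, j_1) if ε_1 = 1 and (a,b) = (j_1, i_1) if ε_1 = −1; in particular this reduced word has length at least 2. -/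
namespace Stmt12

/-- The relations `t_k² = 1` for the universal Coxeter group of rank `m`. -/
def rels (m : ℕ) : Set (FreeGroup (Fin m)) :=
  Set.range fun k : Fin m => FreeGroup.of k * FreeGroup.of k

/-- The universal Coxeter group `G = ⟨t₁,…,t_m ∣ t_k² = 1⟩ = ℤ/2 ∗ ⋯ ∗ ℤ/2`. -/
abbrev G (m : ℕ) := PresentedGroup (rels m)

/-- The generator `t_k` of `G`. -/
def gen (m : ℕ) (k : Fin m) : G m := PresentedGroup.of k

lemma gen_sq (m : ℕ) (a : Fin m) : gen m a * gen m a = 1 := by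
  have h : PresentedGroup.mk (rels m) (FreeGroup.of a * FreeGroup.of a) = 1 :=
    (QuotientGroup.eq_one_iff _).2 (Subgroup.subset_normalClosure ⟨a, rfl⟩)
  simpa [gen, PresentedGroup.of, map_mul] using h

lemma lift_rels (m : ℕ) (σ : Equiv.Perm (Fin m)) :
    ∀ r ∈ rels m, FreeGroup.lift (fun k => gen m (σ k)) r = 1 := by
  rintro r ⟨k, rfl⟩
  simp only [map_mul, FreeGroup.lift_apply_of]
  exact gen_sq m (σ k)

/-- The endomorphism of `G` induced by relabelling the generators along `σ`:
`t_k ↦ t_{σ(k)}`. -/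
def fmap (m : ℕ) (σ : Equiv.Perm (Fin m)) : G m →* G m :=
  PresentedGroup.toGroup (lift_rels m σ)

lemma fmap_comp_cancel (m : ℕ) (σ : Equiv.Perm (Fin m)) :
    (fmap m σ⁻¹).comp (fmap m σ) = MonoidHom.id (G m) := by
  ext x
  simp [fmap, gen]

lemma fmap_mul (m : ℕ) (σ τ : Equiv.Perm (Fin m)) :
    fmap m (σ * τ) = (fmap m σ).comp (fmap m τ) := by
  ext x
  simp [fmap, gen]

lemma fmap_one (m : ℕ) : fmap m 1 = MonoidHom.id (G m) := by
  ext x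
  simp [fmap, gen]

/-- The action of the symmetric group `S_m` on `G` permuting the generators. -/
def permHom (m : ℕ) : Equiv.Perm (Fin m) →* MulAut (G m) where
  toFun σ :=
    { toFun := fmap m σ
      invFun := fmap m σ⁻¹
      left_inv := fun x => DFunLike.congr_fun (fmap_comp_cancel m σ) x
      right_inv := fun x => by
        have h := fmap_comp_cancel m σ⁻¹
        rw [inv_inv] at h
        exact DFunLike.congr_fun h x
      map_mul' := (fmap m σ).map_mul }
  map_one' := by
    ext x
    exact DFunLike.congr_fun (fmap_one m) x
  map_mul' := by
    intro σ τ
    ext x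
    exact DFunLike.congr_fun (fmap_mul m σ τ) x

/-- The semidirect product `G ⋊ S_m`. -/
abbrev Tgt (m : ℕ) := SemidirectProduct (G m) (Equiv.Perm (Fin m)) (permHom m)

/-- The index set `{(i,j) : 1 ≤ i < j ≤ m}`, of cardinality `binom(m,2)`. -/
abbrev Pairs (m : ℕ) := { p : Fin m × Fin m // p.1 < p.2 }

/-- The element `ψ_{i,j} = t_i t_j t_i · σ_{(i,j)} ∈ G ⋊ S_m`. -/
def psi (m : ℕ) (p : Pairs m) : Tgt m :=
  ⟨gen m p.1.1 * gen m p.1.2 * gen m p.1.1, Equiv.swap p.1.1 p.1.2⟩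

section Aux

variable {m : ℕ}

/-- First letter of the 3-letter block of a signed factor. -/
def hdl (y : Pairs m × Bool) : Fin m := if y.2 then y.1.1.1 else y.1.1.2

/-- Second letter of the 3-letter block of a signed factor. -/
def snl (y : Pairs m × Bool) : Fin m := if y.2 then y.1.1.2 else y.1.1.1

/-- The permutation component of a signed factor. -/
def sg (y : Pairs m × Bool) : Equiv.Perm (Fin m) := Equiv.swap y.1.1.1 y.1.1.2

lemma hdl_ne_snl (y : Pairs m × Bool) : hdl y ≠ snl y := by
  have h := y.1.2
  cases hy : y.2 <;> simp [hdl, snl, hy]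
  · exact ne_of_gt h
  · exact ne_of_lt h

lemma sg_hdl (y : Pairs m × Bool) : sg y (hdl y) = snl y := by
  cases hy : y.2 <;> simp [hdl, snl, sg, hy, Equiv.swap_apply_left, Equiv.swap_apply_right]

lemma sg_snl (y : Pairs m × Bool) : sg y (snl y) = hdl y := by
  cases hy : y.2 <;> simp [hdl, snl, sg, hy, Equiv.swap_apply_left, Equiv.swap_apply_right]

lemma sg_other (y : Pairs m × Bool) {c : Fin m} (h1 : c ≠ hdl y) (h2 : c ≠ snl y) :
    sg y c = c := by
  cases hy : y.2 <;> simp only [hdl, snl, hy, if_true, if_false,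
    Bool.false_eq_true, Bool.true_eq_false] at h1 h2
  · exact Equiv.swap_apply_of_ne_of_ne h2 h1
  · exact Equiv.swap_apply_of_ne_of_ne h1 h2

/-- The signed factor in `G ⋊ S_m`. -/
def fac (m : ℕ) (y : Pairs m × Bool) : Tgt m :=
  if y.2 then psi m y.1 else (psi m y.1)⁻¹

lemma gen_inv (a : Fin m) : (gen m a)⁻¹ = gen m a :=
  inv_eq_of_mul_eq_one_right (gen_sq m a)

lemma gen_sq' (a : Fin m) (x : G m) : gen m a * (gen m a * x) = x := by
  rw [← mul_assoc, gen_sq, one_mul]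

lemma fmap_gen (σ : Equiv.Perm (Fin m)) (k : Fin m) :
    fmap m σ (gen m k) = gen m (σ k) := by
  simp [fmap, gen]

lemma fac_right (y : Pairs m × Bool) : (fac m y).right = sg y := by
  cases hy : y.2 <;> simp [fac, hy, psi, sg, SemidirectProduct.inv_right]

lemma psi_inv_left (p : Pairs m) :
    ((psi m p)⁻¹).left = gen m p.1.2 * gen m p.1.1 * gen m p.1.2 := by
  rw [SemidirectProduct.inv_left]
  show fmap m (Equiv.swap p.1.1 p.1.2)⁻¹ ((gen m p.1.1 * gen m p.1.2 * gen m p.1.1)⁻¹) = _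
  rw [Equiv.swap_inv, mul_inv_rev, mul_inv_rev, gen_inv, gen_inv]
  simp [map_mul, fmap_gen, Equiv.swap_apply_left, Equiv.swap_apply_right, mul_assoc]

lemma fac_left (y : Pairs m × Bool) :
    (fac m y).left = gen m (hdl y) * gen m (snl y) * gen m (hdl y) := by
  cases hy : y.2
  · rw [show fac m y = (psi m y.1)⁻¹ from by simp [fac, hy]]
    rw [psi_inv_left]
    simp [hdl, snl, hy]
  · rw [show fac m y = psi m y.1 from by simp [fac, hy]]
    simp [psi, hdl, snl, hy]

lemma fmap_prod (σ : Equiv.Perm (Fin m)) (t : List (Fin m)) :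
    fmap m σ ((t.map (gen m)).prod) = ((t.map σ).map (gen m)).prod := by
  induction t with
  | nil => simp
  | cons a t ih => simp [map_mul, fmap_gen, ih]

/-- The reduced word of the `G`-component, built block by block with cancellation. -/
def T : List (Pairs m × Bool) → List (Fin m)
  | [] => []
  | [y] => [hdl y, snl y, hdl y]
  | y :: z :: l =>
      hdl y :: snl y ::
        (if hdl z = snl y then ((T (z :: l)).drop 1).map (sg y)
         else hdl y :: (T (z :: l)).map (sg y))

lemma T_cons (y : Pairs m × Bool) (L : List (Pairs m × Bool)) :
    ∃ t, T (y :: L) = hdl y :: snl y :: t := by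
  cases L with
  | nil => exact ⟨[hdl y], rfl⟩
  | cons z l => exact ⟨_, rfl⟩

lemma prod_T (L : List (Pairs m × Bool)) (y : Pairs m × Bool) :
    (((y :: L).map (fac m)).prod).left = ((T (y :: L)).map (gen m)).prod := by
  induction L generalizing y with
  | nil => simp [T, fac_left, mul_assoc]
  | cons z l ih =>
      obtain ⟨t, ht⟩ := T_cons z l
      have hmul : (((y :: z :: l).map (fac m)).prod).left
          = (fac m y).left * fmap m (sg y) ((((z :: l).map (fac m)).prod).left) := by
        rw [List.map_cons, List.prod_cons, SemidirectProduct.mul_left, fac_right]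
        rfl
      rw [hmul, ih z, fmap_prod, fac_left]
      by_cases h : hdl z = snl y
      · simp only [T, if_pos h, ht, h, sg_snl, List.drop_succ_cons, List.drop_zero,
          List.map_cons, List.prod_cons]
        simp [mul_assoc, gen_sq']
      · simp only [T, if_neg h, ht, List.map_cons, List.prod_cons]
        simp [mul_assoc]

lemma key_pair (y z : Pairs m × Bool) (h1 : hdl z = snl y) (h2 : snl z = hdl y)
    (hc : ¬(y.1 = z.1 ∧ z.2 = !y.2)) : False := by
  obtain ⟨⟨⟨i, j⟩, hij⟩, ε⟩ := y
  obtain ⟨⟨⟨i', j'⟩, hij'⟩, ε'⟩ := z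
  cases ε <;> cases ε' <;>
    simp only [hdl, snl, if_true, if_false, Bool.not_false, Bool.not_true] at h1 h2 hc <;>
    simp_all
  · exact absurd (h1 ▸ h2 ▸ hij') (lt_asymm hij)
  · exact absurd (h1 ▸ h2 ▸ hij') (lt_asymm hij)

lemma chain_map_ne (σ : Equiv.Perm (Fin m)) {t : List (Fin m)}
    (h : t.Chain' (· ≠ ·)) : (t.map σ).Chain' (· ≠ ·) := by
  unfold List.Chain' at h ⊢
  rw [List.isChain_map]
  exact h.imp fun a b hab => fun hc => hab (σ.injective hc)

lemma chain_T (L : List (Pairs m × Bool)) (y : Pairs m × Bool)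
    (hred : List.Chain' (fun a b : Pairs m × Bool => ¬(a.1 = b.1 ∧ b.2 = !a.2)) (y :: L)) :
    (T (y :: L)).Chain' (· ≠ ·) := by
  induction L generalizing y with
  | nil => simp [T, List.Chain', List.isChain_cons_cons, hdl_ne_snl y, (hdl_ne_snl y).symm]
  | cons z l ih =>
      have hc : ¬(y.1 = z.1 ∧ z.2 = !y.2) := (List.isChain_cons_cons.mp hred).1
      have hred' := (List.isChain_cons_cons.mp hred).2
      have hch : (T (z :: l)).Chain' (· ≠ ·) := ih z hred'
      obtain ⟨t, ht⟩ := T_cons z l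
      by_cases h : hdl z = snl y
      · have hsz1 : snl z ≠ hdl y := fun hh => key_pair y z h hh hc
        have hsz2 : snl z ≠ snl y := h ▸ (hdl_ne_snl z).symm
        have hσ : sg y (snl z) = snl z := sg_other y hsz1 hsz2
        have hdrop : ((T (z :: l)).drop 1) = snl z :: t := by rw [ht]; rfl
        have hchain' : (snl z :: t).Chain' (· ≠ ·) := by
          have := hch; rw [ht] at this
          exact (List.isChain_cons_cons.mp this).2
        simp only [T, if_pos h, hdrop, List.map_cons]
        refine List.isChain_cons_cons.mpr ⟨hdl_ne_snl y, List.isChain_cons_cons.mpr ⟨?_, ?_⟩⟩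
        · rw [hσ]; exact fun hh => hsz2 hh.symm
        · exact chain_map_ne (sg y) hchain'
      · have hne : hdl y ≠ sg y (hdl z) := by
          intro hh
          apply h
          have : sg y (sg y (hdl z)) = sg y (hdl y) := by rw [hh]
          rw [sg_hdl] at this
          have h2 : sg y (sg y (hdl z)) = hdl z := by
            cases hy : y.2 <;> simp [sg, hy, Equiv.swap_apply_self]
          rw [h2] at this
          exact this
        simp only [T, if_neg h, ht, List.map_cons]
        refine List.isChain_cons_cons.mpr ⟨hdl_ne_snl y,
          List.isChain_cons_cons.mpr ⟨(hdl_ne_snl y).symm, List.isChain_cons_cons.mpr ⟨hne, ?_⟩⟩⟩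
        have := chain_map_ne (sg y) hch
        rw [ht] at this
        simpa [List.Chain'] using this

end Aux

/-- If `𝐰 = ψ^{ε₁}_{i₁,j₁} ⋯ ψ^{ε_s}_{i_s,j_s}` is a nonempty freely reduced word in the
`ψ`'s (no factor immediately followed by its inverse), then the reduced word in the
generators `t_k` of the `G`-component of `𝐰` begins with `t_{i₁} t_{j₁}` if `ε₁ = 1` and
with `t_{j₁} t_{i₁}` if `ε₁ = −1`; in particular it has length at least `2`. -/
theorem stmt12 (m : ℕ) (hm : 2 ≤ m) (x : Pairs m × Bool) (L : List (Pairs m × Bool))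
    (hred : List.Chain' (fun a b : Pairs m × Bool => ¬(a.1 = b.1 ∧ b.2 = !a.2)) (x :: L)) :
    ∃ R : List (Fin m), R.Chain' (· ≠ ·) ∧
      (((x :: L).map fun y : Pairs m × Bool => if y.2 then psi m y.1 else (psi m y.1)⁻¹).prod).left =
        (R.map (gen m)).prod ∧
      R.take 2 = (if x.2 then [x.1.1.1, x.1.1.2] else [x.1.1.2, x.1.1.1]) ∧
      2 ≤ R.length := by
  refine ⟨T (x :: L), chain_T L x hred, ?_, ?_, ?_⟩
  · have := prod_T L x
    exact this
  · obtain ⟨t, ht⟩ := T_cons x L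
    rw [ht]
    cases hx : x.2 <;> simp [hdl, snl, hx]
  · obtain ⟨t, ht⟩ := T_cons x L
    rw [ht]
    simp

end Stmt12
end
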